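/- arXiv:2302.02460 — 2 statements merged into one kernel-verified Lean document; each statement's English description precedes it below -/
import Mathlib

section
/- Let n, k be positive integers, let S = P_1 × ⋯ × P_n be a product distribution on [k]^n for which Δ⃗ = (Δ_1,…,Δ_n) is a regular drift sequence with respect to TV, and let 1 ≤ r ≤ n. Let P̂^r be the empirical distribution of the last r samples, P̂^r(j) = (1/r)·∑_{i=n−r+1}^n 1{X_i = j}. Then E_{X∼S}[TV(P_n, P̂^r)] ≤ (1/2)·√(k/r) + Δ_{n−r+1}. -/
open Finset

/-- `p` is a probability mass function on `Fin k` (representing `[k] = {1,…,k}`). -/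
def IsPMF {k : ℕ} (p : Fin k → ℝ) : Prop :=
  (∀ j, 0 ≤ p j) ∧ ∑ j, p j = 1

/-- Total variation distance between two pmfs on `Fin k`. -/
noncomputable def TV {k : ℕ} (p q : Fin k → ℝ) : ℝ :=
  (1 / 2) * ∑ j, |p j - q j|

/-- Probability of the sample `x` under the product distribution whose `i`-th component
(1-based, `i = 1,…,n`) is `P i`. -/
noncomputable def prodProb {n k : ℕ} (P : ℕ → Fin k → ℝ) (x : Fin n → Fin k) : ℝ :=
  ∏ i : Fin n, P (i.1 + 1) (x i)

/-- Expectation of `f` over the product distribution `P 1 × ⋯ × P n` on `[k]^n`. -/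
noncomputable def Exp {n k : ℕ} (P : ℕ → Fin k → ℝ) (f : (Fin n → Fin k) → ℝ) : ℝ :=
  ∑ x : Fin n → Fin k, prodProb P x * f x

/-- Regular drift sequence requirements on `Δ` (1-based indices `1,…,n`),
with regularity constant `c`. -/
def IsRegularDriftSeq (n : ℕ) (c : ℝ) (Δ : ℕ → ℝ) : Prop :=
  (∀ i ∈ Finset.Icc 1 n, 0 ≤ Δ i) ∧
  (∀ i ∈ Finset.Icc 1 (n - 1), Δ (i + 1) ≤ Δ i) ∧
  (∀ i ∈ Finset.Icc 2 (n - 1), Δ (i - 1) ≤ c * Δ i) ∧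
  (∀ i ∈ Finset.Icc 1 n, (Δ i = 0 ↔ i = n))

/-- The empirical distribution of the last `r` samples:
`P̂^r(j) = (1/r)·∑_{i=n−r+1}^n 1{X_i = j}` (sample indices are 1-based). -/
noncomputable def empiricalDist {n : ℕ} (k r : ℕ) (x : Fin n → Fin k) (j : Fin k) : ℝ :=
  (1 / (r : ℝ)) * ∑ i : Fin n, if n - r ≤ (i : ℕ) ∧ x i = j then 1 else 0


/-!
Let `m` be the uniform mixture of `P_{n-r+1}, …, P_n`. By the triangle inequality,
`E TV(P_n, P̂^r) ≤ TV(P_n, m) + E TV(m, P̂^r)`. The bias `TV(P_n, m)` is at most the average of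
`TV(P_i, P_n)` over the last `r` indices, hence at most `Δ_{n-r+1}` because `Δ` is nonincreasing.
For each symbol `j`, `r · P̂^r(j)` is a sum of `r` independent indicators with mean `r · m(j)` and
variance at most `r · m(j)`, so `E |P̂^r(j) - m(j)| ≤ √(m(j)/r)`, and Cauchy–Schwarz gives
`∑_j √(m(j)/r) ≤ √(k/r)`.
-/

lemma sum_sqrt_le_sqrt_card_mul_sum {ι : Type*} (s : Finset ι) {f : ι → ℝ}
    (hf : ∀ i ∈ s, 0 ≤ f i) : ∑ i ∈ s, √(f i) ≤ √(#s * ∑ i ∈ s, f i) := by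
  apply Real.le_sqrt_of_sq_le
  calc (∑ i ∈ s, √(f i)) ^ 2 ≤ #s * ∑ i ∈ s, √(f i) ^ 2 := sq_sum_le_card_mul_sum_sq
    _ = #s * ∑ i ∈ s, f i := by rw [sum_congr rfl fun i hi => Real.sq_sqrt (hf i hi)]

section TV

variable {k : ℕ}

lemma TV_comm (p q : Fin k → ℝ) : TV p q = TV q p := by
  simp only [TV, abs_sub_comm]

lemma TV_triangle (p q m : Fin k → ℝ) : TV p q ≤ TV p m + TV m q := by
  simp only [TV, ← mul_add, ← sum_add_distrib]
  gcongr with j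
  exact abs_sub_le _ _ _

noncomputable def uniformMixture {ι : Type*} (s : Finset ι) (p : ι → Fin k → ℝ) :
    Fin k → ℝ :=
  fun j => (#s : ℝ)⁻¹ * ∑ i ∈ s, p i j

variable {ι : Type*} {s : Finset ι}

lemma isPMF_uniformMixture (hs : s.Nonempty) {p : ι → Fin k → ℝ} (hp : ∀ i ∈ s, IsPMF (p i)) :
    IsPMF (uniformMixture s p) := by
  refine ⟨fun j => mul_nonneg (by positivity) (sum_nonneg fun i hi => (hp i hi).1 j), ?_⟩
  simp only [uniformMixture]
  rw [← mul_sum, sum_comm, sum_congr rfl fun i hi => (hp i hi).2, sum_const,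
    nsmul_one]
  exact inv_mul_cancel₀ (by simpa using hs.ne_empty)

lemma TV_uniformMixture_le (hs : s.Nonempty) (p : ι → Fin k → ℝ) (q : Fin k → ℝ) :
    TV (uniformMixture s p) q ≤ (#s : ℝ)⁻¹ * ∑ i ∈ s, TV (p i) q := by
  have hcard : (#s : ℝ) ≠ 0 := by simpa using hs.ne_empty
  have hsub : ∀ j, uniformMixture s p j - q j = (#s : ℝ)⁻¹ * ∑ i ∈ s, (p i j - q j) := by
    intro j
    rw [uniformMixture, sum_sub_distrib, sum_const, nsmul_eq_mul, mul_sub,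
      inv_mul_cancel_left₀ hcard]
  calc TV (uniformMixture s p) q = (1 / 2) * ∑ j, (#s : ℝ)⁻¹ * |∑ i ∈ s, (p i j - q j)| := by
        simp only [TV, hsub, abs_mul, abs_inv, Nat.abs_cast]
    _ ≤ (1 / 2) * ∑ j, (#s : ℝ)⁻¹ * ∑ i ∈ s, |p i j - q j| := by
        gcongr with j
        exact abs_sum_le_sum_abs _ _
    _ = (#s : ℝ)⁻¹ * ∑ i ∈ s, TV (p i) q := by
        simp only [TV, ← mul_sum]
        rw [sum_comm]
        ring

end TV

lemma IsPMF.sum_mul_indicator_sub_eq_zero {k : ℕ} {p : Fin k → ℝ} (hp : IsPMF p) (j : Fin k) :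
    ∑ a, p a * ((if a = j then 1 else 0) - p j) = 0 := by
  simp [mul_sub, sum_sub_distrib, ← sum_mul, hp.2]

lemma IsPMF.sum_mul_indicator_sub_sq_eq {k : ℕ} {p : Fin k → ℝ} (hp : IsPMF p) (j : Fin k) :
    ∑ a, p a * ((if a = j then 1 else 0) - p j) ^ 2 = p j * (1 - p j) := by
  have h (a : Fin k) : p a * ((if a = j then 1 else 0) - p j) ^ 2
      = (if a = j then p a else 0) * (1 - 2 * p j) + p j ^ 2 * p a := by
    split_ifs <;> ring
  simp only [h, sum_add_distrib, ← sum_mul, ← mul_sum, sum_ite_eq', mem_univ, if_true, hp.2]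
  ring

section Exp

variable {n k : ℕ} (P : ℕ → Fin k → ℝ)

lemma Exp_add (f g : (Fin n → Fin k) → ℝ) :
    Exp P (fun x => f x + g x) = Exp P f + Exp P g := by
  simp only [Exp, mul_add, sum_add_distrib]

lemma Exp_const_mul (a : ℝ) (f : (Fin n → Fin k) → ℝ) :
    Exp P (fun x => a * f x) = a * Exp P f := by
  simp only [Exp, mul_sum, mul_left_comm]

lemma Exp_sum {ι : Type*} (s : Finset ι) (f : ι → (Fin n → Fin k) → ℝ) :
    Exp P (fun x => ∑ i ∈ s, f i x) = ∑ i ∈ s, Exp P (f i) := by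
  simp only [Exp, mul_sum]
  exact sum_comm

lemma Exp_mono (hP0 : ∀ i : Fin n, ∀ a, 0 ≤ P (i + 1) a) {f g : (Fin n → Fin k) → ℝ}
    (h : ∀ x, f x ≤ g x) : Exp P f ≤ Exp P g :=
  sum_le_sum fun x _ => mul_le_mul_of_nonneg_left (h x) (prod_nonneg fun i _ => hP0 i (x i))

lemma Exp_prod (f : Fin n → Fin k → ℝ) :
    Exp P (fun x => ∏ i, f i (x i)) = ∏ i : Fin n, ∑ a, P (i + 1) a * f i a := by
  rw [prod_univ_sum, Fintype.piFinset_univ]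
  simp only [Exp, prodProb, prod_mul_distrib]

variable {P} (hP1 : ∀ i : Fin n, ∑ a, P (i + 1) a = 1)
include hP1

lemma Exp_prod_finset (s : Finset (Fin n)) (f : Fin n → Fin k → ℝ) :
    Exp P (fun x => ∏ i ∈ s, f i (x i)) = ∏ i ∈ s, ∑ a, P (i + 1) a * f i a := by
  have hfactor (i : Fin n) : ∑ a, P (i + 1) a * (if i ∈ s then f i a else 1)
      = if i ∈ s then ∑ a, P (i + 1) a * f i a else 1 := by
    split_ifs <;> simp [hP1]
  calc Exp P (fun x => ∏ i ∈ s, f i (x i))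
      = Exp P (fun x => ∏ i, if i ∈ s then f i (x i) else 1) := by simp only [Fintype.prod_ite_mem]
    _ = ∏ i : Fin n, ∑ a, P (i + 1) a * (if i ∈ s then f i a else 1) :=
        Exp_prod P fun i a => if i ∈ s then f i a else 1
    _ = ∏ i ∈ s, ∑ a, P (i + 1) a * f i a := by rw [prod_congr rfl fun i _ => hfactor i, Fintype.prod_ite_mem]

lemma Exp_const (c : ℝ) : Exp P (fun _ : Fin n → Fin k => c) = c := by
  have h1 : Exp P (fun _ : Fin n → Fin k => (1 : ℝ)) = 1 := by
    simpa using Exp_prod_finset hP1 ∅ fun _ _ => 0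
  have hc := Exp_const_mul P c fun _ : Fin n → Fin k => (1 : ℝ)
  simp only [mul_one] at hc
  rw [hc, h1, mul_one]

lemma Exp_apply (i : Fin n) (g : Fin k → ℝ) :
    Exp P (fun x => g (x i)) = ∑ a, P (i + 1) a * g a := by
  simpa using Exp_prod_finset hP1 {i} fun _ => g

lemma Exp_mul_apply {i i' : Fin n} (hne : i ≠ i') (g g' : Fin k → ℝ) :
    Exp P (fun x => g (x i) * g' (x i')) =
      (∑ a, P (i + 1) a * g a) * ∑ a, P (i' + 1) a * g' a := by
  simpa [prod_pair hne, hne.symm] using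
    Exp_prod_finset hP1 {i, i'} fun l => if l = i then g else g'

lemma Exp_sq_sum_of_centered (s : Finset (Fin n)) (c : Fin n → Fin k → ℝ)
    (hc : ∀ i ∈ s, ∑ a, P (i + 1) a * c i a = 0) :
    Exp P (fun x => (∑ i ∈ s, c i (x i)) ^ 2) = ∑ i ∈ s, ∑ a, P (i + 1) a * c i a ^ 2 := by
  simp_rw [sq, sum_mul_sum]
  rw [Exp_sum]
  refine sum_congr rfl fun i hi => ?_
  rw [Exp_sum, sum_eq_single_of_mem i hi]
  · exact Exp_apply hP1 i fun a => c i a * c i a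
  · intro i' _ hne
    rw [Exp_mul_apply hP1 hne.symm, hc i hi, zero_mul]

lemma Exp_abs_le_sqrt (hP0 : ∀ i : Fin n, ∀ a, 0 ≤ P (i + 1) a) (f : (Fin n → Fin k) → ℝ) :
    Exp P (fun x => |f x|) ≤ √(Exp P fun x => f x ^ 2) := by
  have hw (x : Fin n → Fin k) : 0 ≤ prodProb P x := prod_nonneg fun i _ => hP0 i (x i)
  have htotal : ∑ x : Fin n → Fin k, prodProb P x = 1 := by
    simpa [Exp] using Exp_const hP1 1
  apply Real.le_sqrt_of_sq_le
  have hcs := sum_sq_le_sum_mul_sum_of_sq_le_mul univ (r := fun x => prodProb P x * |f x|)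
    (fun x _ => hw x) (fun x _ => mul_nonneg (hw x) (sq_nonneg (f x)))
    (fun x _ => by rw [mul_pow, sq_abs, sq]; exact le_of_eq (by ring))
  rwa [htotal, one_mul] at hcs

end Exp

section Empirical

variable {n k : ℕ} {P : ℕ → Fin k → ℝ} (hP : ∀ i : Fin n, IsPMF (P (i + 1)))
  {s : Finset (Fin n)}
include hP

lemma Exp_abs_uniformMixture_indicator_sub_le (j : Fin k) :
    Exp P (fun x => |uniformMixture s (fun i b => if x i = b then 1 else 0) j
        - uniformMixture s (fun i => P (i + 1)) j|)
      ≤ √(uniformMixture s (fun i => P (i + 1)) j / #s) := by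
  have hP0 (i : Fin n) := (hP i).1
  have hP1 (i : Fin n) := (hP i).2
  set c : Fin n → Fin k → ℝ := fun i a => (if a = j then 1 else 0) - P (i + 1) j
  have hdev (x : Fin n → Fin k) : uniformMixture s (fun i b => if x i = b then 1 else 0) j
      - uniformMixture s (fun i => P (i + 1)) j = (#s : ℝ)⁻¹ * ∑ i ∈ s, c i (x i) := by
    simp only [uniformMixture, c, sum_sub_distrib, mul_sub]
  have hvar : Exp P (fun x => ((#s : ℝ)⁻¹ * ∑ i ∈ s, c i (x i)) ^ 2)
      ≤ uniformMixture s (fun i => P (i + 1)) j / #s := by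
    simp only [mul_pow]
    rw [Exp_const_mul, Exp_sq_sum_of_centered hP1 s c
      fun i _ => (hP i).sum_mul_indicator_sub_eq_zero j]
    simp only [c, fun i => (hP i).sum_mul_indicator_sub_sq_eq j, uniformMixture]
    calc ((#s : ℝ)⁻¹) ^ 2 * ∑ i ∈ s, P (i + 1) j * (1 - P (i + 1) j)
        ≤ ((#s : ℝ)⁻¹) ^ 2 * ∑ i ∈ s, P (i + 1) j := by
          gcongr with i
          nlinarith [sq_nonneg (P (i + 1) j)]
      _ = ((#s : ℝ)⁻¹ * ∑ i ∈ s, P (i + 1) j) / #s := by ring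
  simp only [hdev]
  exact (Exp_abs_le_sqrt hP1 hP0 _).trans (Real.sqrt_le_sqrt hvar)

lemma Exp_TV_uniformMixture_le (hs : s.Nonempty) :
    Exp P (fun x => TV (uniformMixture s fun i => P (i + 1))
        (uniformMixture s fun i b => if x i = b then 1 else 0)) ≤ 1 / 2 * √(k / #s) := by
  set m := uniformMixture s fun i => P (i + 1)
  have hm : IsPMF m := isPMF_uniformMixture hs fun i _ => hP i
  calc Exp P (fun x => TV m (uniformMixture s fun i b => if x i = b then 1 else 0))
      = 1 / 2 * ∑ j, Exp P (fun x =>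
          |uniformMixture s (fun i b => if x i = b then 1 else 0) j - m j|) := by
        simp only [TV, abs_sub_comm (m _)]
        rw [Exp_const_mul, Exp_sum]
    _ ≤ 1 / 2 * ∑ j, √(m j / #s) := by
        gcongr with j
        exact Exp_abs_uniformMixture_indicator_sub_le hP j
    _ ≤ 1 / 2 * √(k * ∑ j, m j / #s) := by
        gcongr
        simpa using sum_sqrt_le_sqrt_card_mul_sum univ fun j _ =>
          div_nonneg (hm.1 j) (Nat.cast_nonneg #s)
    _ = 1 / 2 * √(k / #s) := by rw [← sum_div, hm.2, mul_one_div]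

end Empirical

/-- The `0`-based indices of the samples `X_{n-r+1}, …, X_n`. -/
def lastSamples (n r : ℕ) : Finset (Fin n) :=
  univ.filter fun i => n - r ≤ (i : ℕ)

lemma card_lastSamples {n r : ℕ} (hrn : r ≤ n) : #(lastSamples n r) = r := by
  have hsplit := card_filter_add_card_filter_not (s := univ) fun i : Fin n => (i : ℕ) < n - r
  simp only [Fin.card_filter_val_lt, card_univ, Fintype.card_fin, not_lt] at hsplit
  rw [lastSamples]
  omega

lemma empiricalDist_eq_uniformMixture {n k r : ℕ} (hrn : r ≤ n) (x : Fin n → Fin k) :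
    empiricalDist k r x = uniformMixture (lastSamples n r) fun i b => if x i = b then 1 else 0 := by
  ext j
  simp only [empiricalDist, uniformMixture, card_lastSamples hrn]
  simp only [lastSamples, sum_filter, one_div, ite_and]

lemma IsRegularDriftSeq.le_of_le {n : ℕ} {c : ℝ} {Δ : ℕ → ℝ} (hΔ : IsRegularDriftSeq n c Δ)
    {a b : ℕ} (ha : 1 ≤ a) (hab : a ≤ b) (hbn : b ≤ n) : Δ b ≤ Δ a := by
  have hanti : AntitoneOn Δ (Set.Icc 1 n) := antitoneOn_of_add_one_le Set.ordConnected_Icc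
    fun i _ hi hi' => hΔ.2.1 i (by simp only [mem_Icc, Set.mem_Icc] at hi hi' ⊢; omega)
  exact hanti ⟨ha, hab.trans hbn⟩ ⟨ha.trans hab, hbn⟩ hab

lemma TV_uniformMixture_lastSamples_le {n k r : ℕ} (hr : 1 ≤ r) (hrn : r ≤ n) {c : ℝ}
    {Δ : ℕ → ℝ} (hΔ : IsRegularDriftSeq n c Δ) {P : ℕ → Fin k → ℝ}
    (hdrift : ∀ i ∈ Finset.Icc 1 n, TV (P i) (P n) ≤ Δ i) :
    TV (P n) (uniformMixture (lastSamples n r) fun i => P (i + 1)) ≤ Δ (n - r + 1) := by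
  have hs : (lastSamples n r).Nonempty := by rw [← card_pos, card_lastSamples hrn]; omega
  rw [TV_comm]
  refine (TV_uniformMixture_le hs _ _).trans ?_
  rw [card_lastSamples hrn, inv_mul_le_iff₀ (by positivity)]
  calc ∑ i ∈ lastSamples n r, TV (P (i + 1)) (P n)
      ≤ ∑ _i ∈ lastSamples n r, Δ (n - r + 1) := by
        refine sum_le_sum fun i hi => ?_
        have hi' : n - r ≤ (i : ℕ) := (mem_filter.1 hi).2
        exact (hdrift (i + 1) (mem_Icc.2 ⟨by omega, by omega⟩)).trans
          (hΔ.le_of_le (by omega) (by omega) (by omega))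
    _ = r * Δ (n - r + 1) := by rw [sum_const, card_lastSamples hrn, nsmul_eq_mul]

theorem stmt1_general (n k r : ℕ) (hr1 : 1 ≤ r) (hrn : r ≤ n)
    (c : ℝ) (Δ : ℕ → ℝ) (P : ℕ → Fin k → ℝ)
    (hreg : IsRegularDriftSeq n c Δ)
    (hpmf : ∀ i ∈ Finset.Icc 1 n, IsPMF (P i))
    (hdrift : ∀ i ∈ Finset.Icc 1 n, TV (P i) (P n) ≤ Δ i) :
    Exp (n := n) P (fun x => TV (P n) (empiricalDist k r x)) ≤
      (1 / 2) * Real.sqrt ((k : ℝ) / r) + Δ (n - r + 1) := by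
  have hP (i : Fin n) : IsPMF (P (i + 1)) := hpmf _ (mem_Icc.2 ⟨by omega, by omega⟩)
  have hs : (lastSamples n r).Nonempty := by rw [← card_pos, card_lastSamples hrn]; omega
  set m := uniformMixture (lastSamples n r) fun i => P (i + 1)
  have hfluct : Exp (n := n) P (fun x => TV m (empiricalDist k r x)) ≤ 1 / 2 * √(k / r) := by
    simpa only [empiricalDist_eq_uniformMixture hrn, card_lastSamples hrn] using
      Exp_TV_uniformMixture_le hP hs
  calc Exp (n := n) P (fun x => TV (P n) (empiricalDist k r x))
      ≤ Exp (n := n) P (fun x => TV (P n) m + TV m (empiricalDist k r x)) :=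
        Exp_mono P (fun i => (hP i).1) fun x => TV_triangle _ _ _
    _ = TV (P n) m + Exp (n := n) P (fun x => TV m (empiricalDist k r x)) := by
        rw [Exp_add, Exp_const fun i => (hP i).2]
    _ ≤ Δ (n - r + 1) + 1 / 2 * √(k / r) :=
        add_le_add (TV_uniformMixture_lastSamples_le hr1 hrn hreg hdrift) hfluct
    _ = (1 / 2) * Real.sqrt ((k : ℝ) / r) + Δ (n - r + 1) := add_comm _ _

/-- For a product distribution with regular drift sequence `Δ⃗` w.r.t. TV,
the empirical distribution of the last `r` samples satisfies
`E[TV(P_n, P̂^r)] ≤ (1/2)·√(k/r) + Δ_{n−r+1}`. -/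
theorem stmt1 (n k r : ℕ) (hn : 0 < n) (hk : 0 < k) (hr1 : 1 ≤ r) (hrn : r ≤ n)
    (c : ℝ) (hc : 1 ≤ c) (Δ : ℕ → ℝ) (P : ℕ → Fin k → ℝ)
    (hreg : IsRegularDriftSeq n c Δ)
    (hpmf : ∀ i ∈ Finset.Icc 1 n, IsPMF (P i))
    (hdrift : ∀ i ∈ Finset.Icc 1 n, TV (P i) (P n) ≤ Δ i) :
    Exp (n := n) P (fun x => TV (P n) (empiricalDist k r x)) ≤
      (1 / 2) * Real.sqrt ((k : ℝ) / r) + Δ (n - r + 1) :=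
  stmt1_general n k r hr1 hrn c Δ P hreg hpmf hdrift
end

section
/- Let n and even k be positive integers, let Δ⃗ = (Δ_1,…,Δ_n) be a regular drift sequence with regularity constant c ≥ 1, and let r* = max{ r ∈ {1,…,n} : Δ_{n−r+1} ≤ √(k/r) }. Assume r* is well-defined, r* > k, and r* < n. Then the minimax risk inf over estimators θ̂_n of sup over S ∈ S_n(Δ⃗,k) of E_{X∼S}[TV(θ̂_n(X), P_n)] is at least Δ_{n−r*+1}/(16·e²); consequently it is at least (1/(16·e²·c))·√(k/(r*+1)). -/
open Finset

/-- Membership in the family `S_n(Δ⃗,k)`. -/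
def InFamily (n k : ℕ) (Δ : ℕ → ℝ) (P : ℕ → Fin k → ℝ) : Prop :=
  (∀ i ∈ Finset.Icc 1 n, IsPMF (P i)) ∧
  (∀ i ∈ Finset.Icc 1 n, TV (P i) (P n) ≤ Δ i)

/-- The minimax risk: infimum over (pmf-valued) estimators of the supremum over
`S ∈ S_n(Δ⃗,k)` of the expected total variation distance to `P_n`. -/
noncomputable def minimaxRisk (n k : ℕ) (Δ : ℕ → ℝ) : ℝ :=
  ⨅ θ : {θ : (Fin n → Fin k) → Fin k → ℝ // ∀ x, IsPMF (θ x)},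
    ⨆ S : {P : ℕ → Fin k → ℝ // InFamily n k Δ P},
      Exp S.1 fun x => TV (θ.1 x) (S.1 n)

/-! Assouad's method. Pair up the `k` symbols and, for each sign vector `τ : Fin (k/2) → Bool`,
tilt the uniform distribution by `±ε/k` on each pair. Let the first `n - r` observations be
uniform and the last `r` follow the tilted law `P_τ`; this is admissible since
`TV(uniform, P_τ) = ε/2 ≤ Δ_i` for `i ≤ n - r`. Flipping one sign changes only the last `r` factors
of the product, each of Hellinger affinity `≥ 1 - 2ε²/k`, so when `4 r ε² ≤ k` the two products
have affinity `≥ 1/2` and, by Le Cam's inequality, overlap `≥ 1/8`. An estimate decodes a sign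
vector (on each pair, the heavier symbol) and every wrong sign costs `ε/k` in total variation, so
Assouad's lemma gives risk `≥ ε/32`. With `ε = min(Δ_{n-r+1}, √(k/r)/2) ≥ Δ_{n-r+1}/2` this is the
first bound; maximality of `r` and regularity give `√(k/(r+1)) < Δ_{n-r} ≤ c Δ_{n-r+1}`, the second.
-/

noncomputable section

lemma TV_self {k : ℕ} (p : Fin k → ℝ) : TV p p = 0 := by
  simp [TV]

lemma TV_le_one {k : ℕ} {p q : Fin k → ℝ} (hp : IsPMF p) (hq : IsPMF q) : TV p q ≤ 1 := by
  have h : ∑ j, |p j - q j| ≤ ∑ j, (p j + q j) := sum_le_sum fun j _ =>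
    (abs_sub _ _).trans_eq (by rw [abs_of_nonneg (hp.1 j), abs_of_nonneg (hq.1 j)])
  rw [sum_add_distrib, hp.2, hq.2] at h
  unfold TV
  linarith

lemma isPMF_unif {k : ℕ} (hk : 0 < k) : IsPMF fun _ : Fin k => (k : ℝ)⁻¹ :=
  ⟨fun _ => by positivity, by simp [hk.ne']⟩

lemma val_add_one_mem_Icc {n : ℕ} (i : Fin n) : i.1 + 1 ∈ Icc 1 n :=
  mem_Icc.2 ⟨Nat.le_add_left 1 _, i.2⟩

section Product

variable {n k : ℕ} {P : ℕ → Fin k → ℝ}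

lemma prodProb_nonneg (hP : ∀ i ∈ Icc 1 n, ∀ a, 0 ≤ P i a) (x : Fin n → Fin k) :
    0 ≤ prodProb P x :=
  prod_nonneg fun i _ => hP _ (val_add_one_mem_Icc i) _

lemma sum_prodProb (hP : ∀ i ∈ Icc 1 n, ∑ a, P i a = 1) :
    ∑ x : Fin n → Fin k, prodProb P x = 1 := by
  simp only [prodProb, ← Fintype.prod_sum]
  exact prod_eq_one fun i _ => hP _ (val_add_one_mem_Icc i)

lemma Exp_le_one (hP : ∀ i ∈ Icc 1 n, IsPMF (P i)) {f : (Fin n → Fin k) → ℝ}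
    (hf : ∀ x, f x ≤ 1) : Exp P f ≤ 1 :=
  calc Exp P f ≤ ∑ x, prodProb P x := sum_le_sum fun x _ =>
        mul_le_of_le_one_right (prodProb_nonneg (fun i hi => (hP i hi).1) x) (hf x)
    _ = 1 := sum_prodProb fun i hi => (hP i hi).2

end Product

lemma le_minimaxRisk {n k : ℕ} {Δ : ℕ → ℝ} {b : ℝ} (hn : 0 < n) (hk : 0 < k)
    (h : ∀ θ : (Fin n → Fin k) → Fin k → ℝ, (∀ x, IsPMF (θ x)) →
      ∃ P, InFamily n k Δ P ∧ b ≤ Exp P fun x => TV (θ x) (P n)) :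
    b ≤ minimaxRisk n k Δ := by
  have : Nonempty {θ : (Fin n → Fin k) → Fin k → ℝ // ∀ x, IsPMF (θ x)} :=
    ⟨⟨fun _ _ => (k : ℝ)⁻¹, fun _ => isPMF_unif hk⟩⟩
  refine le_ciInf fun θ => ?_
  obtain ⟨P, hP, hb⟩ := h θ.1 θ.2
  have hbdd : BddAbove (Set.range fun S : {P : ℕ → Fin k → ℝ // InFamily n k Δ P} =>
      Exp S.1 fun x => TV (θ.1 x) (S.1 n)) := by
    refine ⟨1, Set.forall_mem_range.2 fun S => Exp_le_one S.2.1 fun x => ?_⟩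
    exact TV_le_one (θ.2 x) (S.2.1 n (mem_Icc.2 ⟨hn, le_rfl⟩))
  exact le_ciSup_of_le hbdd ⟨P, hP⟩ hb

def hellingerAffinity {α : Type*} [Fintype α] (p q : α → ℝ) : ℝ :=
  ∑ a, √(p a * q a)

section Hellinger

variable {α : Type*} [Fintype α] {p q : α → ℝ}

lemma hellingerAffinity_self (hp : ∀ a, 0 ≤ p a) : hellingerAffinity p p = ∑ a, p a :=
  sum_congr rfl fun a _ => Real.sqrt_mul_self (hp a)

lemma sq_hellingerAffinity_le (hp : ∀ a, 0 ≤ p a) (hq : ∀ a, 0 ≤ q a)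
    (hp1 : ∑ a, p a = 1) (hq1 : ∑ a, q a = 1) :
    hellingerAffinity p q ^ 2 ≤ 2 * ∑ a, min (p a) (q a) := by
  have hcs := sum_sq_le_sum_mul_sum_of_sq_le_mul univ
    (r := fun a => √(p a * q a)) (f := fun a => min (p a) (q a)) (g := fun a => max (p a) (q a))
    (fun a _ => le_min (hp a) (hq a)) (fun a _ => le_max_of_le_left (hp a))
    (fun a _ => (Real.sq_sqrt (mul_nonneg (hp a) (hq a))).trans_le (min_mul_max _ _).ge)
  have hmax : ∑ a, max (p a) (q a) ≤ 2 :=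
    calc ∑ a, max (p a) (q a) ≤ ∑ a, (p a + q a) :=
          sum_le_sum fun a _ =>
            max_le (le_add_of_nonneg_right (hq a)) (le_add_of_nonneg_left (hp a))
      _ = 2 := by rw [sum_add_distrib, hp1, hq1]; norm_num
  have hmin : 0 ≤ ∑ a, min (p a) (q a) := sum_nonneg fun a _ => le_min (hp a) (hq a)
  unfold hellingerAffinity
  nlinarith

end Hellinger

lemma hellingerAffinity_prodProb {n k : ℕ} {P Q : ℕ → Fin k → ℝ}
    (hP : ∀ i ∈ Icc 1 n, ∀ a, 0 ≤ P i a) (hQ : ∀ i ∈ Icc 1 n, ∀ a, 0 ≤ Q i a) :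
    hellingerAffinity (prodProb (n := n) P) (prodProb Q)
      = ∏ i : Fin n, hellingerAffinity (P (i + 1)) (Q (i + 1)) := by
  simp only [hellingerAffinity, Fintype.prod_sum, prodProb, ← prod_mul_distrib]
  refine sum_congr rfl fun x _ => Real.sqrt_prod _ fun i _ => ?_
  exact mul_nonneg (hP _ (val_add_one_mem_Icc i) _) (hQ _ (val_add_one_mem_Icc i) _)

def flipAt {m : ℕ} (i : Fin m) (τ : Fin m → Bool) : Fin m → Bool :=
  Function.update τ i (!τ i)

section Assouad

variable {m : ℕ}

@[simp]
lemma flipAt_apply_self (i : Fin m) (τ : Fin m → Bool) : flipAt i τ i = !τ i := by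
  simp [flipAt]

lemma flipAt_apply_of_ne {i j : Fin m} (h : j ≠ i) (τ : Fin m → Bool) : flipAt i τ j = τ j := by
  simp [flipAt, h]

lemma flipAt_involutive (i : Fin m) : Function.Involutive (flipAt i) := by
  intro τ
  ext j
  by_cases h : j = i
  · subst h; simp
  · simp [flipAt_apply_of_ne h]

theorem exists_le_sum_mul_hammingDist {X : Type*} [Fintype X] (π : (Fin m → Bool) → X → ℝ)
    (d : X → Fin m → Bool) {β : ℝ} (hβ : ∀ i τ, β ≤ ∑ x, min (π τ x) (π (flipAt i τ) x)) :
    ∃ τ, m * β / 2 ≤ ∑ x, π τ x * hammingDist (d x) τ := by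
  let err (i : Fin m) (τ : Fin m → Bool) : ℝ := ∑ x, π τ x * if d x i ≠ τ i then 1 else 0
  have herr : ∀ i, 2 ^ m * (β / 2) ≤ ∑ τ, err i τ := by
    intro i
    have hpair : ∀ τ, β ≤ err i τ + err i (flipAt i τ) := fun τ => (hβ i τ).trans <| by
      simp only [err, ← sum_add_distrib, flipAt_apply_self]
      refine sum_le_sum fun x _ => ?_
      cases d x i <;> cases τ i <;> simp
    have hsum := sum_le_sum fun τ (_ : τ ∈ univ) => hpair τ
    have hflip : ∑ τ, err i (flipAt i τ) = ∑ τ, err i τ :=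
      Equiv.sum_comp (flipAt_involutive i).toPerm (err i)
    rw [sum_add_distrib, hflip] at hsum
    simp only [sum_const, card_univ, Fintype.card_fun, Fintype.card_bool, Fintype.card_fin,
      nsmul_eq_mul, Nat.cast_pow, Nat.cast_ofNat] at hsum
    linarith
  have hham : ∀ x τ, (hammingDist (d x) τ : ℝ) = ∑ i, if d x i ≠ τ i then 1 else 0 := by
    intro x τ
    simp [hammingDist, card_filter]
  have htotal : ∑ _τ : Fin m → Bool, m * β / 2 ≤ ∑ τ, ∑ x, π τ x * hammingDist (d x) τ :=
    calc ∑ _τ : Fin m → Bool, m * β / 2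
        = ∑ _i : Fin m, 2 ^ m * (β / 2) := by
          simp only [sum_const, card_univ, Fintype.card_fun, Fintype.card_bool, Fintype.card_fin,
            nsmul_eq_mul, Nat.cast_pow, Nat.cast_ofNat]
          ring
      _ ≤ ∑ i, ∑ τ, err i τ := sum_le_sum fun i _ => herr i
      _ = ∑ τ, ∑ x, π τ x * hammingDist (d x) τ := by
        simp only [err, hham, mul_sum]
        rw [sum_comm]
        exact sum_congr rfl fun τ _ => sum_comm
  obtain ⟨τ, -, hτ⟩ := exists_le_of_sum_le univ_nonempty htotal
  exact ⟨τ, hτ⟩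

end Assouad

def pairPerturbation (k : ℕ) (ε : ℝ) {m : ℕ} (τ : Fin m → Bool) (p : Fin m × Bool) : ℝ :=
  (1 + if p.2 = τ p.1 then ε else -ε) / k

def perturbation {k m : ℕ} (e : Fin m × Bool ≃ Fin k) (ε : ℝ) (τ : Fin m → Bool) : Fin k → ℝ :=
  fun j => pairPerturbation k ε τ (e.symm j)

lemma natCast_mul_two_eq {k m : ℕ} (e : Fin m × Bool ≃ Fin k) : (m : ℝ) * 2 = k := by
  have h := Fintype.card_congr e
  simp only [Fintype.card_prod, Fintype.card_fin, Fintype.card_bool] at h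
  exact_mod_cast h

section Perturbation

variable {k m : ℕ} (e : Fin m × Bool ≃ Fin k) {ε : ℝ}

@[simp]
lemma perturbation_apply_equiv (τ : Fin m → Bool) (p : Fin m × Bool) :
    perturbation e ε τ (e p) = pairPerturbation k ε τ p := by
  simp [perturbation]

lemma pairPerturbation_nonneg (hε0 : 0 ≤ ε) (hε1 : ε ≤ 1) (τ : Fin m → Bool) (p : Fin m × Bool) :
    0 ≤ pairPerturbation k ε τ p := by
  unfold pairPerturbation
  split_ifs <;> apply div_nonneg <;> linarith [(Nat.cast_nonneg k : (0 : ℝ) ≤ k)]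

lemma sum_bool_pairPerturbation (τ : Fin m → Bool) (i : Fin m) :
    ∑ b, pairPerturbation k ε τ (i, b) = 2 / k := by
  simp only [pairPerturbation, Fintype.sum_bool]
  cases τ i <;> simp <;> ring

lemma isPMF_perturbation (hk : 0 < k) (hε0 : 0 ≤ ε) (hε1 : ε ≤ 1) (τ : Fin m → Bool) :
    IsPMF (perturbation e ε τ) := by
  refine ⟨fun j => pairPerturbation_nonneg hε0 hε1 τ _, ?_⟩
  rw [← e.sum_comp, Fintype.sum_prod_type]
  simp only [perturbation_apply_equiv, sum_bool_pairPerturbation, sum_const, card_univ,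
    Fintype.card_fin, nsmul_eq_mul]
  rw [← mul_div_assoc, natCast_mul_two_eq e, div_self (Nat.cast_ne_zero.2 hk.ne')]

lemma TV_unif_perturbation (hk : 0 < k) (τ : Fin m → Bool) :
    TV (fun _ => (k : ℝ)⁻¹) (perturbation e ε τ) = |ε| / 2 := by
  have hk' : (k : ℝ) ≠ 0 := Nat.cast_ne_zero.2 hk.ne'
  have hterm : ∀ p, |(k : ℝ)⁻¹ - pairPerturbation k ε τ p| = |ε| / k := by
    intro p
    rw [pairPerturbation, inv_eq_one_div, div_sub_div_same, abs_div, Nat.abs_cast]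
    split_ifs <;> simp
  simp only [TV, ← e.sum_comp, perturbation_apply_equiv, hterm, sum_const, card_univ,
    Fintype.card_congr e, Fintype.card_fin, nsmul_eq_mul]
  field_simp

lemma sum_bool_sqrt_pairPerturbation_mul (hε0 : 0 ≤ ε) (hε1 : ε ≤ 1) (τ σ : Fin m → Bool)
    (i : Fin m) :
    ∑ b, √(pairPerturbation k ε τ (i, b) * pairPerturbation k ε σ (i, b))
      = if σ i = τ i then (2 : ℝ) / k else 2 * √(1 - ε ^ 2) / k := by
  split_ifs with h
  · have hσ : ∀ b, pairPerturbation k ε σ (i, b) = pairPerturbation k ε τ (i, b) := by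
      simp [pairPerturbation, h]
    simp_rw [hσ, Real.sqrt_mul_self (pairPerturbation_nonneg hε0 hε1 τ _)]
    exact sum_bool_pairPerturbation τ i
  · have hprod : ∀ b, pairPerturbation k ε τ (i, b) * pairPerturbation k ε σ (i, b)
        = (1 - ε ^ 2) / k ^ 2 := by
      have hσ : σ i = !τ i := Bool.eq_not.2 h
      intro b
      simp only [pairPerturbation, hσ]
      cases b <;> cases τ i <;> simp <;> ring
    simp only [hprod, Real.sqrt_div' _ (sq_nonneg (k : ℝ)), Real.sqrt_sq (Nat.cast_nonneg k),
      Fintype.sum_bool]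
    ring

lemma one_sub_le_hellingerAffinity_perturbation_flipAt (hε0 : 0 ≤ ε) (hε1 : ε ≤ 1)
    (τ : Fin m → Bool) (i₀ : Fin m) :
    1 - 2 * ε ^ 2 / k
      ≤ hellingerAffinity (perturbation e ε τ) (perturbation e ε (flipAt i₀ τ)) := by
  have hsqrt : 1 - ε ^ 2 ≤ √(1 - ε ^ 2) := by
    have hε2 : ε ^ 2 ≤ 1 := pow_le_one₀ hε0 hε1
    exact Real.le_sqrt_of_sq_le (by nlinarith [mul_le_mul_of_nonneg_left hε2 (sq_nonneg ε)])
  have hpair : ∀ i, (2 : ℝ) / k - (if i = i₀ then 2 * ε ^ 2 / k else 0)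
      ≤ ∑ b, √(pairPerturbation k ε τ (i, b) * pairPerturbation k ε (flipAt i₀ τ) (i, b)) := by
    intro i
    rw [sum_bool_sqrt_pairPerturbation_mul hε0 hε1]
    by_cases h : i = i₀
    · subst h
      simp only [if_true, flipAt_apply_self, Bool.not_eq_self, if_false]
      rw [← sub_div]
      exact div_le_div_of_nonneg_right (by linarith) (Nat.cast_nonneg k)
    · simp [h, flipAt_apply_of_ne h]
  have hk : (k : ℝ) ≠ 0 := by
    rw [← natCast_mul_two_eq e]
    have := i₀.pos
    positivity
  have hsum : ∑ i : Fin m, ((2 : ℝ) / k - if i = i₀ then 2 * ε ^ 2 / k else 0)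
      = 1 - 2 * ε ^ 2 / k := by
    rw [sum_sub_distrib, sum_ite_eq' univ i₀, if_pos (mem_univ _), sum_const, card_univ,
      Fintype.card_fin, nsmul_eq_mul, ← mul_div_assoc, natCast_mul_two_eq e, div_self hk]
  rw [← hsum, hellingerAffinity, ← e.sum_comp, Fintype.sum_prod_type]
  simp only [perturbation_apply_equiv]
  exact sum_le_sum fun i _ => hpair i

end Perturbation

def decode {k m : ℕ} (e : Fin m × Bool ≃ Fin k) (v : Fin k → ℝ) (i : Fin m) : Bool :=
  decide (v (e (i, false)) ≤ v (e (i, true)))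

section Decode

variable {k m : ℕ} (e : Fin m × Bool ≃ Fin k) {ε : ℝ}

lemma decode_spec (v : Fin k → ℝ) (i : Fin m) :
    v (e (i, !decode e v i)) ≤ v (e (i, decode e v i)) := by
  by_cases h : v (e (i, false)) ≤ v (e (i, true))
  · simp [decode, h]
  · simp only [decode, h, decide_false, Bool.not_false]
    exact (not_le.1 h).le

lemma two_mul_div_le_sum_bool_abs_sub (v : Fin k → ℝ) (τ : Fin m → Bool) {i : Fin m}
    (h : decode e v i ≠ τ i) :
    2 * ε / k ≤ ∑ b, |v (e (i, b)) - pairPerturbation k ε τ (i, b)| := by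
  have hle := decode_spec e v i
  rw [Bool.eq_not.2 h, Bool.not_not] at hle
  have hsplit : ∀ f : Bool → ℝ, ∑ b, f b = f (τ i) + f (!τ i) := by
    intro f
    cases τ i <;> simp [add_comm]
  rw [hsplit]
  simp only [pairPerturbation, if_true, Bool.not_eq_self, if_false]
  have hgap : (1 + ε) / k - (1 + -ε) / k = 2 * ε / k := by ring
  linarith [neg_abs_le (v (e (i, τ i)) - (1 + ε) / k), le_abs_self (v (e (i, !τ i)) - (1 + -ε) / k)]

lemma mul_hammingDist_decode_le_TV (v : Fin k → ℝ) (τ : Fin m → Bool) :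
    ε / k * hammingDist (decode e v) τ ≤ TV v (perturbation e ε τ) := by
  have hpair : ∀ i, (if decode e v i ≠ τ i then ε / k else 0)
      ≤ 1 / 2 * ∑ b, |v (e (i, b)) - pairPerturbation k ε τ (i, b)| := by
    intro i
    split_ifs with h
    · have hi := two_mul_div_le_sum_bool_abs_sub e (ε := ε) v τ h
      rw [mul_div_assoc] at hi
      linarith
    · positivity
  calc ε / k * hammingDist (decode e v) τ = ∑ i, if decode e v i ≠ τ i then ε / k else 0 := by
        simp [hammingDist, sum_ite, mul_comm]
    _ ≤ ∑ i, 1 / 2 * ∑ b, |v (e (i, b)) - pairPerturbation k ε τ (i, b)| :=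
        sum_le_sum fun i _ => hpair i
    _ = TV v (perturbation e ε τ) := by
        rw [TV, ← e.sum_comp, Fintype.sum_prod_type, mul_sum]
        simp

end Decode

def hardFamily (n r : ℕ) {k m : ℕ} (e : Fin m × Bool ≃ Fin k) (ε : ℝ) (τ : Fin m → Bool) :
    ℕ → Fin k → ℝ :=
  fun i => if i ≤ n - r then fun _ => (k : ℝ)⁻¹ else perturbation e ε τ

section HardFamily

variable {n r k m : ℕ} (e : Fin m × Bool ≃ Fin k) {ε : ℝ}

lemma isPMF_hardFamily (hk : 0 < k) (hε0 : 0 ≤ ε) (hε1 : ε ≤ 1) (τ : Fin m → Bool) (i : ℕ) :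
    IsPMF (hardFamily n r e ε τ i) := by
  unfold hardFamily
  split_ifs
  exacts [isPMF_unif hk, isPMF_perturbation e hk hε0 hε1 τ]

lemma hardFamily_self (hr : 0 < r) (hrn : r ≤ n) (τ : Fin m → Bool) :
    hardFamily n r e ε τ n = perturbation e ε τ :=
  if_neg (by omega)

lemma inFamily_hardFamily {Δ : ℕ → ℝ} (hk : 0 < k) (hε0 : 0 ≤ ε) (hε1 : ε ≤ 1) (hr : 0 < r)
    (hrn : r ≤ n) (hΔ : ∀ i ∈ Icc 1 n, 0 ≤ Δ i) (hεΔ : ∀ i ∈ Icc 1 (n - r), ε / 2 ≤ Δ i)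
    (τ : Fin m → Bool) : InFamily n k Δ (hardFamily n r e ε τ) := by
  refine ⟨fun i _ => isPMF_hardFamily e hk hε0 hε1 τ i, fun i hi => ?_⟩
  rw [hardFamily_self e hr hrn]
  by_cases h : i ≤ n - r
  · simp only [hardFamily, if_pos h]
    rw [TV_unif_perturbation e hk, abs_of_nonneg hε0]
    exact hεΔ i (mem_Icc.2 ⟨(mem_Icc.1 hi).1, h⟩)
  · simp only [hardFamily, if_neg h, TV_self]
    exact hΔ i hi

lemma half_le_hellingerAffinity_hardFamily (hε0 : 0 ≤ ε) (hε1 : ε ≤ 1) (hεr : 4 * r * ε ^ 2 ≤ k)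
    (hrn : r ≤ n) (τ : Fin m → Bool) (i₀ : Fin m) :
    1 / 2 ≤ hellingerAffinity (prodProb (n := n) (hardFamily n r e ε τ))
      (prodProb (hardFamily n r e ε (flipAt i₀ τ))) := by
  have hk2 : (2 : ℝ) ≤ k := by
    rw [← natCast_mul_two_eq e]
    have : (1 : ℝ) ≤ m := Nat.one_le_cast.2 i₀.pos
    linarith
  have hk : 0 < k := by exact_mod_cast (by linarith : (0 : ℝ) < k)
  set a := hellingerAffinity (perturbation e ε τ) (perturbation e ε (flipAt i₀ τ))
  have hnonneg := fun σ i (_ : i ∈ Icc 1 n) =>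
    (isPMF_hardFamily (n := n) (r := r) e hk hε0 hε1 σ i).1
  have hfactor : ∀ i : ℕ, hellingerAffinity (hardFamily n r e ε τ (i + 1))
      (hardFamily n r e ε (flipAt i₀ τ) (i + 1)) = if i < n - r then 1 else a := by
    intro i
    by_cases h : i < n - r
    · simp only [hardFamily, if_pos (Nat.succ_le_of_lt h), if_pos h]
      rw [hellingerAffinity_self fun _ => by positivity]
      exact (isPMF_unif hk).2
    · simp only [hardFamily, if_neg (show ¬ i + 1 ≤ n - r by omega), if_neg h, a]
  rw [hellingerAffinity_prodProb (hnonneg τ) (hnonneg _)]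
  simp only [hfactor]
  rw [Fin.prod_univ_eq_prod_range (fun i => if i < n - r then 1 else a) n,
    show range n = range (n - r + r) by rw [Nat.sub_add_cancel hrn], prod_range_add,
    prod_eq_one fun i hi => if_pos (mem_range.1 hi)]
  simp only [add_lt_iff_neg_left, not_lt_zero, if_false, prod_const, card_range, one_mul]
  have ha : 1 + -(2 * ε ^ 2 / k) ≤ a := by
    rw [← sub_eq_add_neg]
    exact one_sub_le_hellingerAffinity_perturbation_flipAt e hε0 hε1 τ i₀
  have hsmall : 2 * ε ^ 2 / k ≤ 1 := by
    rw [div_le_one (by linarith)]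
    nlinarith [pow_le_one₀ hε0 hε1 (n := 2)]
  have hr : r * (2 * ε ^ 2 / k) ≤ 1 / 2 := by
    rw [← mul_div_assoc, div_le_iff₀ (by linarith)]
    linarith
  calc (1 : ℝ) / 2 ≤ 1 + r * -(2 * ε ^ 2 / k) := by linarith
    _ ≤ (1 + -(2 * ε ^ 2 / k)) ^ r := one_add_mul_le_pow (by linarith) r
    _ ≤ a ^ r := pow_le_pow_left₀ (by linarith) ha r

theorem exists_le_Exp_TV_hardFamily (hk : 0 < k) (hε0 : 0 ≤ ε) (hε1 : ε ≤ 1)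
    (hεr : 4 * r * ε ^ 2 ≤ k) (hrn : r ≤ n) (θ : (Fin n → Fin k) → Fin k → ℝ) :
    ∃ τ, ε / 32 ≤ Exp (hardFamily n r e ε τ) fun x => TV (θ x) (perturbation e ε τ) := by
  set π := fun τ => prodProb (n := n) (hardFamily n r e ε τ)
  have hπ0 : ∀ τ x, 0 ≤ π τ x := fun τ =>
    prodProb_nonneg fun i _ => (isPMF_hardFamily e hk hε0 hε1 τ i).1
  have hπ1 : ∀ τ, ∑ x, π τ x = 1 := fun τ =>
    sum_prodProb fun i _ => (isPMF_hardFamily e hk hε0 hε1 τ i).2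
  have hoverlap : ∀ i τ, 1 / 8 ≤ ∑ x, min (π τ x) (π (flipAt i τ) x) := by
    intro i τ
    have hsq := sq_hellingerAffinity_le (hπ0 τ) (hπ0 (flipAt i τ)) (hπ1 τ) (hπ1 _)
    have hhalf := half_le_hellingerAffinity_hardFamily e hε0 hε1 hεr hrn τ i
    nlinarith
  obtain ⟨τ, hτ⟩ := exists_le_sum_mul_hammingDist π (fun x => decode e (θ x)) hoverlap
  refine ⟨τ, ?_⟩
  have hm : (m : ℝ) ≠ 0 := by
    have h2 := natCast_mul_two_eq e
    intro h
    rw [h, zero_mul] at h2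
    exact (Nat.cast_pos.2 hk).ne h2
  calc ε / 32 = ε / k * (m * (1 / 8) / 2) := by
        rw [← natCast_mul_two_eq e]
        field_simp
        ring
    _ ≤ ε / k * ∑ x, π τ x * hammingDist (decode e (θ x)) τ := by gcongr
    _ ≤ Exp (hardFamily n r e ε τ) fun x => TV (θ x) (perturbation e ε τ) := by
        rw [mul_sum]
        refine sum_le_sum fun x _ => ?_
        rw [mul_left_comm]
        exact mul_le_mul_of_nonneg_left (mul_hammingDist_decode_le_TV e (θ x) τ) (hπ0 τ x)

end HardFamily

theorem div_le_minimaxRisk_of_hardFamily {n k r : ℕ} {Δ : ℕ → ℝ} {ε : ℝ} (hk : 0 < k)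
    (hkeven : k % 2 = 0) (hr : 0 < r) (hrn : r ≤ n) (hε0 : 0 ≤ ε) (hε1 : ε ≤ 1)
    (hεr : 4 * r * ε ^ 2 ≤ k) (hΔ : ∀ i ∈ Icc 1 n, 0 ≤ Δ i)
    (hεΔ : ∀ i ∈ Icc 1 (n - r), ε / 2 ≤ Δ i) :
    ε / 32 ≤ minimaxRisk n k Δ := by
  let e : Fin (k / 2) × Bool ≃ Fin k := Fintype.equivFinOfCardEq <| by
    simp only [Fintype.card_prod, Fintype.card_fin, Fintype.card_bool]
    omega
  refine le_minimaxRisk (by omega) hk fun θ _ => ?_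
  obtain ⟨τ, hτ⟩ := exists_le_Exp_TV_hardFamily e hk hε0 hε1 hεr hrn θ
  refine ⟨_, inFamily_hardFamily e hk hε0 hε1 hr hrn hΔ hεΔ τ, ?_⟩
  rwa [hardFamily_self e hr hrn]

lemma exists_perturbation_size {k r : ℕ} {δ : ℝ} (hδ : 0 ≤ δ) (hδr : δ ≤ √((k : ℝ) / r))
    (hkr : k ≤ r) (hr : 0 < r) :
    ∃ ε : ℝ, 0 ≤ ε ∧ ε ≤ 1 ∧ 4 * r * ε ^ 2 ≤ k ∧ ε ≤ δ ∧ δ ≤ 2 * ε := by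
  have hr' : (0 : ℝ) < r := Nat.cast_pos.2 hr
  have hsqrt : √((k : ℝ) / r) ≤ 1 :=
    Real.sqrt_le_one.2 ((div_le_one hr').2 (by exact_mod_cast hkr))
  refine ⟨min δ (√((k : ℝ) / r) / 2), le_min hδ (by positivity),
    (min_le_right _ _).trans (by linarith), ?_, min_le_left _ _, ?_⟩
  · have h := pow_le_pow_left₀ (le_min hδ (by positivity)) (min_le_right δ (√((k : ℝ) / r) / 2)) 2
    rw [div_pow, Real.sq_sqrt (by positivity)] at h
    calc (4 : ℝ) * r * min δ (√((k : ℝ) / r) / 2) ^ 2 ≤ 4 * r * (k / r / 2 ^ 2) := by gcongr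
      _ = (k : ℝ) := by field_simp; ring
  · have := le_min (by linarith : δ / 2 ≤ δ) (by linarith : δ / 2 ≤ √((k : ℝ) / r) / 2)
    linarith

lemma IsRegularDriftSeq.antitoneOn {n : ℕ} {c : ℝ} {Δ : ℕ → ℝ} (h : IsRegularDriftSeq n c Δ) :
    AntitoneOn Δ (Set.Icc 1 n) := by
  intro a ha b hb hab
  induction b, hab using Nat.le_induction with
  | base => exact le_rfl
  | succ b hab ih =>
    exact (h.2.1 b (mem_Icc.2 ⟨ha.1.trans hab, by have := hb.2; omega⟩)).trans
      (ih ⟨ha.1.trans hab, by have := hb.2; omega⟩)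

lemma IsRegularDriftSeq.sqrt_div_succ_lt {n k r : ℕ} {c : ℝ} {Δ : ℕ → ℝ}
    (h : IsRegularDriftSeq n c Δ)
    (hmax : ∀ r' ∈ Icc 1 n, Δ (n - r' + 1) ≤ √((k : ℝ) / r') → r' ≤ r) (hr : 2 ≤ r) (hrn : r < n) :
    √((k : ℝ) / (r + 1)) < c * Δ (n - r + 1) := by
  have hnext : √((k : ℝ) / (r + 1)) < Δ (n - r) := by
    by_contra! hle
    have := hmax (r + 1) (mem_Icc.2 ⟨by omega, by omega⟩)
      (by rw [show n - (r + 1) + 1 = n - r by omega]; exact_mod_cast hle)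
    omega
  have hreg : Δ (n - r) ≤ c * Δ (n - r + 1) := by
    simpa using h.2.2.1 (n - r + 1) (mem_Icc.2 ⟨by omega, by omega⟩)
  exact hnext.trans_le hreg

end

theorem stmt11_general (n k r : ℕ) (hk : 0 < k) (hkeven : k % 2 = 0)
    (c : ℝ) (hc : 1 ≤ c) (Δ : ℕ → ℝ)
    (hreg : IsRegularDriftSeq n c Δ)
    (hΔr : Δ (n - r + 1) ≤ Real.sqrt ((k : ℝ) / r))
    (hmax : ∀ r' ∈ Finset.Icc 1 n, Δ (n - r' + 1) ≤ Real.sqrt ((k : ℝ) / r') → r' ≤ r)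
    (hkr : k < r) (hrn : r < n) :
    Δ (n - r + 1) / (16 * Real.exp 2) ≤ minimaxRisk n k Δ ∧
    (1 / (16 * Real.exp 2 * c)) * Real.sqrt ((k : ℝ) / (r + 1)) ≤ minimaxRisk n k Δ := by
  set δ := Δ (n - r + 1)
  have hδ : 0 ≤ δ := hreg.1 _ (mem_Icc.2 ⟨by omega, by omega⟩)
  obtain ⟨ε, hε0, hε1, hεr, hεδ, hδε⟩ := exists_perturbation_size hδ hΔr hkr.le (by omega)
  have hexp : 4 ≤ Real.exp 2 := by
    have := Real.add_one_le_exp 1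
    rw [show (2 : ℝ) = 1 + 1 by norm_num, Real.exp_add]
    nlinarith
  have hrisk : δ / (16 * Real.exp 2) ≤ minimaxRisk n k Δ := by
    refine le_trans ?_ (div_le_minimaxRisk_of_hardFamily hk hkeven (by omega) hrn.le hε0 hε1 hεr
      hreg.1 fun i hi => ?_)
    · calc δ / (16 * Real.exp 2) ≤ δ / 64 := by gcongr; linarith
        _ ≤ ε / 32 := by linarith
    · have hi := mem_Icc.1 hi
      have := hreg.antitoneOn ⟨hi.1, by omega⟩ ⟨by omega, by omega⟩ (by omega : i ≤ n - r + 1)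
      linarith
  refine ⟨hrisk, le_trans ?_ hrisk⟩
  have hnext := hreg.sqrt_div_succ_lt hmax (by omega) hrn
  calc 1 / (16 * Real.exp 2 * c) * √((k : ℝ) / (r + 1))
      ≤ 1 / (16 * Real.exp 2 * c) * (c * δ) := by gcongr
    _ = δ / (16 * Real.exp 2) := by field_simp

/-- lower bound of Theorem 1. For even `k`, a regular drift sequence with
constant `c ≥ 1`, and `r* = max{r ∈ [n] : Δ_{n−r+1} ≤ √(k/r)}` well-defined with
`k < r* < n`, the minimax risk is at least `Δ_{n−r*+1}/(16e²)`, and consequently at least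
`(1/(16e²c))·√(k/(r*+1))`. -/
theorem stmt11 (n k r : ℕ) (hn : 0 < n) (hk : 0 < k) (hkeven : k % 2 = 0)
    (c : ℝ) (hc : 1 ≤ c) (Δ : ℕ → ℝ)
    (hreg : IsRegularDriftSeq n c Δ)
    (hr : r ∈ Finset.Icc 1 n)
    (hΔr : Δ (n - r + 1) ≤ Real.sqrt ((k : ℝ) / r))
    (hmax : ∀ r' ∈ Finset.Icc 1 n, Δ (n - r' + 1) ≤ Real.sqrt ((k : ℝ) / r') → r' ≤ r)
    (hkr : k < r) (hrn : r < n) :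
    Δ (n - r + 1) / (16 * Real.exp 2) ≤ minimaxRisk n k Δ ∧
    (1 / (16 * Real.exp 2 * c)) * Real.sqrt ((k : ℝ) / (r + 1)) ≤ minimaxRisk n k Δ :=
  stmt11_general n k r hk hkeven c hc Δ hreg hΔr hmax hkr hrn
end
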